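/- Suppose U additionally satisfies the reasonable asymptotic elasticity conditions limsup_{x→+∞} x·U'(x)/U(x) < 1 and liminf_{x→−∞} x·U'(x)/U(x) > 1. Let (Ω, F, P) be a probability space and ρ a random variable with ρ > 0 almost surely, E_P[ρ] = 1, and E_P[Ũ(ρ)] < ∞. Then for every y > 0 one has E_P[Ũ(y·ρ)] < ∞. -/

import Mathlib

/-! Far out on either half-line the elasticity bound `x U'(x) ≤ γ U(x)` integrates to
`U (t x) ≤ t ^ γ U x` for `t ≥ 1`, with `γ < 1` near `+∞` and `γ > 1` near `-∞`.
Put `s = t ^ (γ - 1)` and substitute `x = t x'` in the supremum defining `Ũ (s z)`: the far region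
contributes at most `t ^ γ Ũ z`, the opposite half-line at most `Ũ z`, and the bounded middle
region at most an affine function of `z`. So `Ũ (y ρ)` lies between the constant `U 0` and
an integrable function of `ρ`. -/

open Filter Set MeasureTheory

/-- The convex conjugate `Ũ(y) = sup_{x ∈ ℝ} (U(x) − x·y)`. -/
noncomputable def Utilde (U : ℝ → ℝ) (y : ℝ) : ℝ := ⨆ x : ℝ, (U x - x * y)

theorem ConcaveOn.le_add_deriv_mul_sub {f : ℝ → ℝ} (hf : ConcaveOn ℝ univ f) {a : ℝ}
    (ha : DifferentiableAt ℝ f a) (x : ℝ) : f x ≤ f a + deriv f a * (x - a) := by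
  rcases lt_trichotomy x a with h | rfl | h
  · have := hf.deriv_le_slope (mem_univ x) (mem_univ a) h ha
    rw [slope_def_field, le_div_iff₀ (sub_pos.2 h)] at this
    linarith
  · simp
  · have := hf.slope_le_deriv (mem_univ a) (mem_univ x) h ha
    rw [slope_def_field, div_le_iff₀ (sub_pos.2 h)] at this
    linarith

variable {U : ℝ → ℝ} {z : ℝ}

theorem le_rpow_mul_of_mul_deriv_le (hd : Differentiable ℝ U) {γ x : ℝ}
    (h : ∀ μ, 1 ≤ μ → μ * x * deriv U (μ * x) ≤ γ * U (μ * x)) {t : ℝ} (ht : 1 ≤ t) :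
    U (t * x) ≤ t ^ γ * U x := by
  set φ : ℝ → ℝ := fun μ => μ ^ (-γ) * U (μ * x)
  have hφ : ∀ μ, 0 < μ →
      HasDerivAt φ (μ ^ (-γ - 1) * (μ * x * deriv U (μ * x) - γ * U (μ * x))) μ := by
    intro μ hμ
    have hpow := Real.hasDerivAt_rpow_const (x := μ) (p := -γ) (Or.inl hμ.ne')
    have hcomp := (hd (μ * x)).hasDerivAt.comp μ ((hasDerivAt_id μ).mul_const x)
    refine (hpow.mul hcomp).congr_deriv ?_
    rw [Real.rpow_sub_one hμ.ne']
    simp only [Function.comp_apply, id]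
    field_simp
    ring
  have hanti : AntitoneOn φ (Ici 1) := by
    refine antitoneOn_of_deriv_nonpos (convex_Ici 1) ?_ ?_ ?_ <;> try rw [interior_Ici]
    · exact fun μ hμ => (hφ μ (zero_lt_one.trans_le hμ)).continuousAt.continuousWithinAt
    · exact fun μ hμ => (hφ μ (zero_lt_one.trans hμ)).differentiableAt.differentiableWithinAt
    · intro μ hμ
      rw [(hφ μ (zero_lt_one.trans hμ)).deriv]
      exact mul_nonpos_of_nonneg_of_nonpos (Real.rpow_nonneg (zero_lt_one.trans hμ).le _)
        (sub_nonpos.2 (h μ hμ.le))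
  have hφt : t ^ (-γ) * U (t * x) ≤ U x := by
    simpa [φ] using hanti (mem_Ici.2 le_rfl) (mem_Ici.2 ht) ht
  calc U (t * x) = t ^ γ * (t ^ (-γ) * U (t * x)) := by
        rw [← mul_assoc, ← Real.rpow_add (by linarith), add_neg_cancel, Real.rpow_zero, one_mul]
    _ ≤ t ^ γ * U x := by gcongr

theorem bddAbove_range_sub_mul (hc : ConcaveOn ℝ univ U) (hd : Differentiable ℝ U)
    (htop : Tendsto (deriv U) atTop (nhds 0)) (hbot : Tendsto (deriv U) atBot atTop)
    (hz : 0 < z) : BddAbove (range fun x => U x - x * z) := by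
  obtain ⟨a, ha⟩ := (htop.eventually_lt_const hz).exists
  obtain ⟨b, hb⟩ := (hbot.eventually_gt_atTop z).exists
  refine ⟨max (U a - deriv U a * a) (U b - deriv U b * b), forall_mem_range.2 fun x => ?_⟩
  rcases le_total 0 x with hx | hx
  · have := hc.le_add_deriv_mul_sub (hd a) x
    have := mul_nonneg hx (sub_nonneg.2 ha.le)
    linarith [le_max_left (U a - deriv U a * a) (U b - deriv U b * b)]
  · have := hc.le_add_deriv_mul_sub (hd b) x
    have := mul_nonneg_of_nonpos_of_nonpos hx (sub_nonpos.2 hb.le)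
    linarith [le_max_right (U a - deriv U a * a) (U b - deriv U b * b)]

theorem measurable_Utilde (hU : Continuous U) : Measurable (Utilde U) := by
  obtain ⟨S, hS, hSd⟩ := TopologicalSpace.exists_countable_dense ℝ
  have : Countable S := hS.to_subtype
  have hUtilde : Utilde U = fun z => ⨆ s : S, (U s - s * z) :=
    funext fun z => (hSd.ciSup' (by fun_prop)).symm -- also where both suprema are junk `0`
  rw [hUtilde]
  exact Measurable.iSup fun s => by fun_prop

theorem sub_mul_le_Utilde_of_mul_le (hz : BddAbove (range fun x => U x - x * z)) {x w : ℝ}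
    (h : x * z ≤ x * w) : U x - x * w ≤ Utilde U z :=
  (sub_le_sub_left h _).trans (le_ciSup hz x)

theorem sub_mul_le_rpow_mul_Utilde (hz : BddAbove (range fun x => U x - x * z))
    {t γ x : ℝ} (ht : 0 < t) (hscale : U (t * x) ≤ t ^ γ * U x) :
    U (t * x) - t * x * (t ^ (γ - 1) * z) ≤ t ^ γ * Utilde U z := by
  have hpow : t * x * (t ^ (γ - 1) * z) = t ^ γ * (x * z) := by
    rw [Real.rpow_sub_one ht.ne']
    field_simp
  have hle : U x - x * z ≤ Utilde U z := le_ciSup hz x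
  rw [hpow]
  nlinarith [Real.rpow_nonneg ht.le γ]

theorem exists_eventually_mul_deriv_le_of_limsup_lt (hc : ConcaveOn ℝ univ U)
    (hd : Differentiable ℝ U) (hU : Tendsto U atTop atTop)
    (hAE : limsup (fun x => x * deriv U x / U x) atTop < 1) :
    ∃ γ < 1, ∀ᶠ x in atTop, x * deriv U x ≤ γ * U x := by
  have hpos : ∀ᶠ x in atTop, max 0 (-U 0) < U x := hU.eventually_gt_atTop _
  have hbdd : IsBoundedUnder (· ≤ ·) atTop (fun x => x * deriv U x / U x) := by
    refine ⟨2, eventually_map.2 ?_⟩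
    filter_upwards [hpos] with x hx
    have := hc.le_add_deriv_mul_sub (hd x) 0
    rw [div_le_iff₀ ((le_max_left _ _).trans_lt hx)]
    linarith [le_max_right 0 (-U 0)]
  obtain ⟨γ, hlγ, hγ⟩ := exists_between hAE
  refine ⟨γ, hγ, ?_⟩
  filter_upwards [eventually_lt_of_limsup_lt hlγ hbdd, hpos] with x hx hUx
  exact ((div_lt_iff₀ ((le_max_left _ _).trans_lt hUx)).1 hx).le

theorem exists_eventually_mul_deriv_le_of_one_lt_liminf (hmono : Monotone U)
    (hAE : 1 < liminf (fun x => x * deriv U x / U x) atBot) :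
    ∃ γ, 1 < γ ∧ ∀ᶠ x in atBot, x * deriv U x ≤ γ * U x := by
  have hbdd : IsBoundedUnder (· ≥ ·) atBot (fun x => x * deriv U x / U x) := by
    by_contra h
    rw [Real.liminf_of_not_isBoundedUnder h] at hAE
    norm_num at hAE
  obtain ⟨γ, h1γ, hγl⟩ := exists_between hAE
  refine ⟨γ, h1γ, ?_⟩
  filter_upwards [eventually_lt_of_lt_liminf hγl hbdd, eventually_lt_atBot 0] with x hx hx0
  have hnum : x * deriv U x ≤ 0 := mul_nonpos_of_nonpos_of_nonneg hx0.le hmono.deriv_nonneg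
  have hUx : U x < 0 := by
    by_contra! h
    linarith [div_nonpos_of_nonpos_of_nonneg hnum h]
  exact ((lt_div_iff_of_neg hUx).1 hx).le

theorem Utilde_mul_le_max_of_le (hz : BddAbove (range fun x => U x - x * z)) (hz0 : 0 ≤ z)
    {s M : ℝ} (hs0 : 0 ≤ s) (hs1 : s ≤ 1) (hM : ∀ x, U x ≤ M) :
    Utilde U (s * z) ≤ max (Utilde U z) M := by
  refine ciSup_le fun x => ?_
  rcases le_total x 0 with hx | hx
  · refine le_max_of_le_left (sub_mul_le_Utilde_of_mul_le hz ?_)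
    nlinarith [mul_nonneg (neg_nonneg.2 hx) hz0]
  · exact le_max_of_le_right (by nlinarith [hM x, mul_nonneg hx (mul_nonneg hs0 hz0)])

theorem Utilde_rpow_mul_le_of_mul_deriv_le_atTop (hd : Differentiable ℝ U) (hmono : Monotone U)
    (hz : BddAbove (range fun x => U x - x * z)) (hz0 : 0 ≤ z) {γ x₀ t : ℝ} (hγ : γ ≤ 1)
    (hx₀ : 0 ≤ x₀) (hel : ∀ x, x₀ ≤ x → x * deriv U x ≤ γ * U x) (ht : 1 ≤ t) :
    Utilde U (t ^ (γ - 1) * z) ≤ max (Utilde U z) (max (t ^ γ * Utilde U z) (U (t * x₀))) := by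
  have ht0 : 0 < t := by linarith
  have hs1 : t ^ (γ - 1) ≤ 1 := Real.rpow_le_one_of_one_le_of_nonpos ht (by linarith)
  have hs0 : 0 ≤ t ^ (γ - 1) := Real.rpow_nonneg ht0.le _
  refine ciSup_le fun x => ?_
  rcases le_total x 0 with hx | hx
  · refine le_max_of_le_left (sub_mul_le_Utilde_of_mul_le hz ?_)
    nlinarith [mul_nonneg (neg_nonneg.2 hx) hz0]
  rcases le_total x (t * x₀) with hxt | hxt
  · refine le_max_of_le_right (le_max_of_le_right ?_)
    nlinarith [hmono hxt, mul_nonneg hx (mul_nonneg hs0 hz0)]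
  · refine le_max_of_le_right (le_max_of_le_left ?_)
    obtain ⟨x', rfl⟩ : ∃ x', x = t * x' := ⟨x / t, by field_simp⟩
    have hx' : x₀ ≤ x' := le_of_mul_le_mul_left hxt ht0
    refine sub_mul_le_rpow_mul_Utilde hz ht0 (le_rpow_mul_of_mul_deriv_le hd (fun μ hμ => ?_) ht)
    exact hel _ (hx'.trans (le_mul_of_one_le_left (hx₀.trans hx') hμ))

theorem Utilde_rpow_mul_le_of_mul_deriv_le_atBot (hd : Differentiable ℝ U) (hmono : Monotone U)
    (hz : BddAbove (range fun x => U x - x * z)) (hz0 : 0 ≤ z) {γ x₁ t : ℝ} (hγ : 1 ≤ γ)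
    (hx₁ : x₁ ≤ 0) (hel : ∀ x, x ≤ x₁ → x * deriv U x ≤ γ * U x) (ht : 1 ≤ t) :
    Utilde U (t ^ (γ - 1) * z) ≤
      max (Utilde U z) (max (t ^ γ * Utilde U z) (U 0 - t ^ γ * x₁ * z)) := by
  have ht0 : 0 < t := by linarith
  have hs1 : 1 ≤ t ^ (γ - 1) := Real.one_le_rpow ht (by linarith)
  have hpow : t * t ^ (γ - 1) = t ^ γ := by
    rw [Real.rpow_sub_one ht0.ne']
    field_simp
  refine ciSup_le fun x => ?_
  rcases le_total 0 x with hx | hx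
  · refine le_max_of_le_left (sub_mul_le_Utilde_of_mul_le hz ?_)
    nlinarith [mul_nonneg hx hz0]
  rcases le_total (t * x₁) x with hxt | hxt
  · refine le_max_of_le_right (le_max_of_le_right ?_)
    have hmid : -x * (t ^ (γ - 1) * z) ≤ -(t * x₁) * (t ^ (γ - 1) * z) :=
      mul_le_mul_of_nonneg_right (neg_le_neg hxt) (by positivity)
    rw [← hpow]
    nlinarith [hmono hx]
  · refine le_max_of_le_right (le_max_of_le_left ?_)
    obtain ⟨x', rfl⟩ : ∃ x', x = t * x' := ⟨x / t, by field_simp⟩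
    have hx' : x' ≤ x₁ := le_of_mul_le_mul_left hxt ht0
    refine sub_mul_le_rpow_mul_Utilde hz ht0 (le_rpow_mul_of_mul_deriv_le hd (fun μ hμ => ?_) ht)
    exact hel _ ((mul_le_of_one_le_left (hx'.trans hx₁) hμ).trans hx')

theorem exists_Utilde_mul_le (hc : ConcaveOn ℝ univ U) (hd : Differentiable ℝ U)
    (hmono : Monotone U) (hfin : ∀ z, 0 < z → BddAbove (range fun x => U x - x * z))
    (hAE_top : limsup (fun x => x * deriv U x / U x) atTop < 1)
    (hAE_bot : 1 < liminf (fun x => x * deriv U x / U x) atBot) {s : ℝ} (hs : 0 < s) :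
    ∃ A B C : ℝ, ∀ z, 0 < z →
      Utilde U (s * z) ≤ max (Utilde U z) (max (A * Utilde U z) (B * z + C)) := by
  rcases le_total s 1 with hs1 | hs1
  · -- the elasticity bound at `+∞` needs `U` eventually positive
    by_cases hbdd : BddAbove (range U)
    · obtain ⟨M, hM⟩ := hbdd
      refine ⟨0, 0, M, fun z hz => ?_⟩
      exact (Utilde_mul_le_max_of_le (hfin z hz) hz.le hs.le hs1 fun x => hM ⟨x, rfl⟩).trans
        (max_le_max le_rfl (le_max_of_le_right (by simp)))
    have hU : Tendsto U atTop atTop := tendsto_atTop_atTop_of_monotone hmono fun b => by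
      obtain ⟨_, ⟨x, rfl⟩, hx⟩ := not_bddAbove_iff.1 hbdd b
      exact ⟨x, hx.le⟩
    obtain ⟨γ, hγ, hev⟩ := exists_eventually_mul_deriv_le_of_limsup_lt hc hd hU hAE_top
    obtain ⟨x₀, hx₀⟩ := eventually_atTop.1 (hev.and (eventually_ge_atTop 0))
    set t := s ^ (γ - 1)⁻¹
    have hts : t ^ (γ - 1) = s := Real.rpow_inv_rpow hs.le (sub_ne_zero.2 hγ.ne)
    have ht : 1 ≤ t :=
      Real.one_le_rpow_of_pos_of_le_one_of_nonpos hs hs1 (inv_nonpos.2 (by linarith))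
    refine ⟨t ^ γ, 0, U (t * x₀), fun z hz => ?_⟩
    rw [← hts]
    exact (Utilde_rpow_mul_le_of_mul_deriv_le_atTop hd hmono (hfin z hz) hz.le hγ.le
      (hx₀ x₀ le_rfl).2 (fun x hx => (hx₀ x hx).1) ht).trans
      (max_le_max le_rfl (max_le_max le_rfl (by simp)))
  · obtain ⟨γ, hγ, hev⟩ := exists_eventually_mul_deriv_le_of_one_lt_liminf hmono hAE_bot
    obtain ⟨x₁, hx₁⟩ := eventually_atBot.1 (hev.and (eventually_le_atBot 0))
    set t := s ^ (γ - 1)⁻¹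
    have hts : t ^ (γ - 1) = s := Real.rpow_inv_rpow hs.le (sub_ne_zero.2 hγ.ne')
    have ht : 1 ≤ t := Real.one_le_rpow hs1 (inv_nonneg.2 (by linarith))
    refine ⟨t ^ γ, -(t ^ γ * x₁), U 0, fun z hz => ?_⟩
    rw [← hts]
    exact (Utilde_rpow_mul_le_of_mul_deriv_le_atBot hd hmono (hfin z hz) hz.le hγ.le
      (hx₁ x₁ le_rfl).2 (fun x hx => (hx₁ x hx).1) ht).trans
      (max_le_max le_rfl (max_le_max le_rfl (le_of_eq (by ring))))

theorem dual_integrability_for_all_scalings_general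
    (U : ℝ → ℝ)
    (hU_smooth : ContDiff ℝ 1 U)
    (hU_mono : StrictMono U)
    (hU_concave : StrictConcaveOn ℝ Set.univ U)
    (hInada_top : Tendsto (deriv U) atTop (nhds 0))
    (hInada_bot : Tendsto (deriv U) atBot atTop)
    (hAE_top : Filter.limsup (fun x : ℝ => x * deriv U x / U x) atTop < 1)
    (hAE_bot : 1 < Filter.liminf (fun x : ℝ => x * deriv U x / U x) atBot)
    {Ω : Type*} [MeasurableSpace Ω]
    (P : Measure Ω) [IsProbabilityMeasure P]
    (ρ : Ω → ℝ)
    (hρ_pos : ∀ᵐ ω ∂P, 0 < ρ ω)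
    (hρ_int : Integrable ρ P)
    (hUρ_int : Integrable (fun ω => Utilde U (ρ ω)) P) :
    ∀ y : ℝ, 0 < y → Integrable (fun ω => Utilde U (y * ρ ω)) P := by
  intro y hy
  have hd : Differentiable ℝ U := hU_smooth.differentiable one_ne_zero
  have hc : ConcaveOn ℝ univ U := hU_concave.concaveOn
  have hfin : ∀ z, 0 < z → BddAbove (range fun x => U x - x * z) :=
    fun z hz => bddAbove_range_sub_mul hc hd hInada_top hInada_bot hz
  obtain ⟨A, B, C, hbound⟩ :=
    exists_Utilde_mul_le hc hd hU_mono.monotone hfin hAE_top hAE_bot hy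
  refine integrable_of_le_of_le (g₁ := fun _ => U 0)
    (g₂ := fun ω => max (Utilde U (ρ ω)) (max (A * Utilde U (ρ ω)) (B * ρ ω + C)))
    ((measurable_Utilde hU_smooth.continuous).comp_aemeasurable
      (hρ_int.aemeasurable.const_mul y)).aestronglyMeasurable ?_ ?_ (integrable_const _)
    (hUρ_int.sup ((hUρ_int.const_mul A).sup ((hρ_int.const_mul B).add (integrable_const C))))
  · filter_upwards [hρ_pos] with ω hω
    simpa [Utilde] using le_ciSup (hfin _ (mul_pos hy hω)) 0
  · filter_upwards [hρ_pos] with ω hω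
    exact hbound _ hω

/-- Suppose `U` additionally satisfies the reasonable
asymptotic elasticity conditions `limsup_{x→+∞} x·U'(x)/U(x) < 1` and
`liminf_{x→−∞} x·U'(x)/U(x) > 1`.  If `ρ` is a random variable with `ρ > 0`
a.s., `E_P[ρ] = 1` and `E_P[Ũ(ρ)] < ∞`, then `E_P[Ũ(y·ρ)] < ∞` for every
`y > 0`. -/
theorem dual_integrability_for_all_scalings
    (U : ℝ → ℝ)
    (hU_smooth : ContDiff ℝ 1 U)
    (hU_mono : StrictMono U)
    (hU_concave : StrictConcaveOn ℝ Set.univ U)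
    (hInada_top : Tendsto (deriv U) atTop (nhds 0))
    (hInada_bot : Tendsto (deriv U) atBot atTop)
    (hAE_top : Filter.limsup (fun x : ℝ => x * deriv U x / U x) atTop < 1)
    (hAE_bot : 1 < Filter.liminf (fun x : ℝ => x * deriv U x / U x) atBot)
    {Ω : Type*} [MeasurableSpace Ω]
    (P : Measure Ω) [IsProbabilityMeasure P]
    (ρ : Ω → ℝ) (hρ_meas : Measurable ρ)
    (hρ_pos : ∀ᵐ ω ∂P, 0 < ρ ω)
    (hρ_int : Integrable ρ P)
    (hρ_mean : ∫ ω, ρ ω ∂P = 1)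
    (hUρ_int : Integrable (fun ω => Utilde U (ρ ω)) P) :
    ∀ y : ℝ, 0 < y → Integrable (fun ω => Utilde U (y * ρ ω)) P :=
  dual_integrability_for_all_scalings_general U hU_smooth hU_mono hU_concave hInada_top hInada_bot
    hAE_top hAE_bot P ρ hρ_pos hρ_int hUρ_int
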